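/- arXiv:2008.00846 — 4 statements merged into one kernel-verified Lean document; each statement's English description precedes it below -/
import Mathlib

section
/- Let R > 0 and define w : (0,∞) → ℝ by w(r) = ((1−r²)/(2r))·arctan r − ((1−R²)/(2R))·arctan R. Then w(R) = 0, w(r) → 1/2 − ((1−R²)/(2R))·arctan R as r → 0⁺, and for every r > 0 one has d/dr ( r² · (2/(1+r²)) · w′(r) ) = − r² · (2/(1+r²))³. That is, w solves the three-dimensional radial torsion equation −(r² p(r) w′)′ = r² p(r)³ on (0,R) with w(R) = 0, where p(r) = 2/(1+r²). -/
/-!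
With `u r = (1 - r²)/(2r) · arctan r`, the flux `r² p(r) u'(r)` simplifies to
`-arctan r + (r - r³)/(1 + r²)²`, whose derivative is `-8r²/(1 + r²)³ = -r² p(r)³`.
The limit at `0` comes from `arctan r / r → 1`, i.e. `arctan' 0 = 1`.
-/

open Real Filter Topology

theorem tendsto_arctan_div_self : Tendsto (fun x : ℝ => arctan x / x) (𝓝[≠] 0) (𝓝 1) := by
  simpa [div_eq_inv_mul] using (hasDerivAt_arctan 0).tendsto_slope_zero

noncomputable def torsionProfile (r : ℝ) : ℝ := (1 - r ^ 2) / (2 * r) * arctan r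

noncomputable def torsionFlux (r : ℝ) : ℝ := -arctan r + (r - r ^ 3) / (1 + r ^ 2) ^ 2

theorem tendsto_torsionProfile : Tendsto torsionProfile (𝓝[≠] 0) (𝓝 (1 / 2)) := by
  have hpoly : Tendsto (fun r : ℝ => (1 - r ^ 2) / 2) (𝓝[≠] 0) (𝓝 (1 / 2)) := by
    have : Continuous fun r : ℝ => (1 - r ^ 2) / 2 := by fun_prop
    simpa using (this.tendsto 0).mono_left nhdsWithin_le_nhds
  have hlim := hpoly.mul tendsto_arctan_div_self
  rw [mul_one] at hlim
  refine hlim.congr' ?_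
  filter_upwards [self_mem_nhdsWithin] with r (hr : r ≠ 0)
  rw [torsionProfile]
  field_simp

theorem hasDerivAt_torsionProfile {r : ℝ} (hr : r ≠ 0) :
    HasDerivAt torsionProfile
      (-(1 + r ^ 2) / (2 * r ^ 2) * arctan r + (1 - r ^ 2) / (2 * r) * (1 / (1 + r ^ 2))) r := by
  have hnum : HasDerivAt (fun t : ℝ => 1 - t ^ 2) (-(2 * r)) r := by
    simpa using (hasDerivAt_pow 2 r).const_sub 1
  have hden : HasDerivAt (fun t : ℝ => 2 * t) 2 r := by
    simpa using (hasDerivAt_id r).const_mul (2 : ℝ)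
  have hquot : HasDerivAt (fun t : ℝ => (1 - t ^ 2) / (2 * t)) (-(1 + r ^ 2) / (2 * r ^ 2)) r :=
    (hnum.fun_div hden (by positivity)).congr_deriv (by field_simp; ring)
  exact hquot.fun_mul (hasDerivAt_arctan r)

theorem sq_mul_deriv_torsionProfile {r : ℝ} (hr : r ≠ 0) :
    r ^ 2 * (2 / (1 + r ^ 2)) * deriv torsionProfile r = torsionFlux r := by
  have : 1 + r ^ 2 ≠ 0 := by positivity
  rw [(hasDerivAt_torsionProfile hr).deriv, torsionFlux]
  field_simp

theorem hasDerivAt_torsionFlux (r : ℝ) :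
    HasDerivAt torsionFlux (-(r ^ 2 * (2 / (1 + r ^ 2)) ^ 3)) r := by
  have hnum : HasDerivAt (fun t : ℝ => t - t ^ 3) (1 - 3 * r ^ 2) r := by
    simpa using (hasDerivAt_id' r).fun_sub (hasDerivAt_pow 3 r)
  have hden : HasDerivAt (fun t : ℝ => (1 + t ^ 2) ^ 2) (4 * r * (1 + r ^ 2)) r :=
    (((hasDerivAt_pow 2 r).const_add 1).fun_pow 2).congr_deriv (by norm_num; ring)
  have : 1 + r ^ 2 ≠ 0 := by positivity
  exact ((hasDerivAt_arctan r).fun_neg.fun_add (hnum.fun_div hden (by positivity))).congr_deriv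
    (by field_simp; ring)

theorem torsion_function_dim_three_general
    (R : ℝ)
    (w : ℝ → ℝ)
    (hw : ∀ r : ℝ, w r =
      (1 - r ^ 2) / (2 * r) * Real.arctan r - (1 - R ^ 2) / (2 * R) * Real.arctan R) :
    w R = 0 ∧
    Tendsto w (𝓝[>] 0) (𝓝 (1 / 2 - (1 - R ^ 2) / (2 * R) * Real.arctan R)) ∧
    ∀ r : ℝ, 0 < r →
      deriv (fun r : ℝ => r ^ 2 * (2 / (1 + r ^ 2)) * deriv w r) r
        = -(r ^ 2 * (2 / (1 + r ^ 2)) ^ 3) := by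
  have hw' : w = fun r => torsionProfile r - torsionProfile R := funext hw
  subst hw'
  refine ⟨sub_self _, ?_, fun r hr => ?_⟩
  · exact (tendsto_torsionProfile.mono_left (nhdsGT_le_nhdsNE 0)).sub tendsto_const_nhds
  · have hflux : (fun s : ℝ => s ^ 2 * (2 / (1 + s ^ 2)) * deriv torsionProfile s)
        =ᶠ[𝓝 r] torsionFlux := by
      filter_upwards [isOpen_ne.mem_nhds hr.ne'] with s hs
      exact sq_mul_deriv_torsionProfile hs
    simp only [deriv_sub_const_fun]
    rw [hflux.deriv_eq, (hasDerivAt_torsionFlux r).deriv]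

theorem torsion_function_dim_three
    (R : ℝ) (hR : 0 < R)
    (w : ℝ → ℝ)
    (hw : ∀ r : ℝ, w r =
      (1 - r ^ 2) / (2 * r) * Real.arctan r - (1 - R ^ 2) / (2 * R) * Real.arctan R) :
    w R = 0 ∧
    Tendsto w (𝓝[>] 0) (𝓝 (1 / 2 - (1 - R ^ 2) / (2 * R) * Real.arctan R)) ∧
    ∀ r : ℝ, 0 < r →
      deriv (fun r : ℝ => r ^ 2 * (2 / (1 + r ^ 2)) * deriv w r) r
        = -(r ^ 2 * (2 / (1 + r ^ 2)) ^ 3) :=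
  torsion_function_dim_three_general R w hw
end

section
/- With R(ε) = tan((1−ε)π/2), the function ε ↦ 1/2 − ((1−R(ε)²)/(2R(ε)))·arctan(R(ε)) − 1/(2ε) tends to 0 as ε → 0 from the right. In particular, the maximum value w(0⁺) = 1/2 − ((1−R²)/(2R))·arctan R of the three-dimensional torsion function of the spherical cap Ω_ε satisfies ‖w‖_∞ = 1/(2ε) + O(1) as ε → 0⁺. -/
/-!
With `θ = (1 - ε) π / 2` and `R = tan θ`, the double-angle formula gives
`(1 - R²) / (2R) = cot (2θ) = -cot (πε)`, and `arctan R = θ`. Writing `t = πε`, the expression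
becomes `1/2 + (π/2) (cot t - 1/t) - (t cot t)/2`, which tends to `1/2 + 0 - 1/2 = 0` because
`-t ≤ cot t - 1/t ≤ 0` for small `t > 0`.
-/

open Filter Topology Real

namespace Real

theorem neg_le_cot_sub_inv {t : ℝ} (ht₀ : 0 < t) (ht₁ : t ≤ 1) : -t ≤ cot t - t⁻¹ := by
  have hsin : 0 < sin t := sin_pos_of_pos_of_lt_pi ht₀ (by linarith [pi_gt_three])
  have key : (1 - t ^ 2) * sin t ≤ t * cos t := by
    have hcos : 1 - t ^ 2 / 2 ≤ cos t := one_sub_sq_div_two_le_cos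
    calc (1 - t ^ 2) * sin t ≤ (1 - t ^ 2) * t :=
          mul_le_mul_of_nonneg_left (sin_le ht₀.le) (by nlinarith)
      _ ≤ t * (1 - t ^ 2 / 2) := by nlinarith [pow_pos ht₀ 3]
      _ ≤ t * cos t := mul_le_mul_of_nonneg_left hcos ht₀.le
  have hdiff : cot t - t⁻¹ - -t = (t * cos t - (1 - t ^ 2) * sin t) / (t * sin t) := by
    rw [cot_eq_cos_div_sin]
    field_simp
    ring
  rw [← sub_nonneg, hdiff]
  exact div_nonneg (sub_nonneg.mpr key) (mul_pos ht₀ hsin).le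

theorem cot_sub_inv_nonpos {t : ℝ} (ht₀ : 0 < t) (ht : t < π / 2) : cot t - t⁻¹ ≤ 0 := by
  have hcos : 0 < cos t := cos_pos_of_mem_Ioo ⟨by linarith, ht⟩
  have htan : t < sin t / cos t := tan_eq_sin_div_cos t ▸ lt_tan ht₀ ht
  rw [sub_nonpos, cot_eq_cos_div_sin, ← inv_div]
  exact inv_anti₀ ht₀ htan.le

theorem tendsto_cot_sub_inv_nhdsGT_zero :
    Tendsto (fun t => cot t - t⁻¹) (𝓝[>] 0) (𝓝 0) := by
  have hlower : Tendsto (fun t : ℝ => -t) (𝓝[>] 0) (𝓝 0) := by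
    simpa using (continuous_neg.tendsto' (0 : ℝ) 0 neg_zero).mono_left nhdsWithin_le_nhds
  refine tendsto_of_tendsto_of_tendsto_of_le_of_le' hlower tendsto_const_nhds ?_ ?_
  all_goals
    filter_upwards [Ioc_mem_nhdsGT (zero_lt_one' ℝ)] with t ⟨ht₀, ht₁⟩
  · exact neg_le_cot_sub_inv ht₀ ht₁
  · exact cot_sub_inv_nonpos ht₀ (by linarith [pi_gt_three])

theorem tendsto_mul_cot_nhdsGT_zero : Tendsto (fun t => t * cot t) (𝓝[>] 0) (𝓝 1) := by
  have h : Tendsto (fun t => 1 + t * (cot t - t⁻¹)) (𝓝[>] 0) (𝓝 (1 + 0 * 0)) :=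
    tendsto_const_nhds.add
      ((tendsto_id.mono_left nhdsWithin_le_nhds).mul tendsto_cot_sub_inv_nhdsGT_zero)
  rw [mul_zero, add_zero] at h
  refine h.congr' ?_
  filter_upwards [self_mem_nhdsWithin] with t (ht : 0 < t)
  field_simp
  ring

theorem one_sub_tan_sq_div_two_mul_tan (x : ℝ) : (1 - tan x ^ 2) / (2 * tan x) = cot (2 * x) := by
  rw [← tan_inv_eq_cot, tan_two_mul, inv_div]

theorem cot_pi_sub (x : ℝ) : cot (π - x) = -cot x := by
  rw [← tan_inv_eq_cot, tan_pi_sub, inv_neg, tan_inv_eq_cot]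

end Real

theorem torsion_sup_dim_three_asymptotics :
    Tendsto
      (fun ε : ℝ =>
        1 / 2
          - (1 - Real.tan ((1 - ε) * Real.pi / 2) ^ 2)
              / (2 * Real.tan ((1 - ε) * Real.pi / 2))
              * Real.arctan (Real.tan ((1 - ε) * Real.pi / 2))
          - 1 / (2 * ε))
      (𝓝[>] 0) (𝓝 0) := by
  set g : ℝ → ℝ := fun t => 1 / 2 + π / 2 * (cot t - t⁻¹) - t * cot t / 2
  have hg : Tendsto g (𝓝[>] 0) (𝓝 0) := by
    have : Tendsto g (𝓝[>] 0) (𝓝 (1 / 2 + π / 2 * 0 - 1 / 2)) :=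
      (tendsto_const_nhds.add (tendsto_const_nhds.mul tendsto_cot_sub_inv_nhdsGT_zero)).sub
        (tendsto_mul_cot_nhdsGT_zero.div_const 2)
    simpa using this
  have hscale : Tendsto (π * ·) (𝓝[>] (0 : ℝ)) (𝓝[>] 0) := by
    simpa only [comap_mulLeft_nhdsGT_zero pi_pos] using tendsto_comap (f := (π * ·)) (x := 𝓝[>] 0)
  refine (hg.comp hscale).congr' ?_
  filter_upwards [Ioo_mem_nhdsGT (zero_lt_one' ℝ)] with ε ⟨hε₀, hε₁⟩
  have harctan : arctan (tan ((1 - ε) * π / 2)) = (1 - ε) * π / 2 :=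
    arctan_tan (by nlinarith [pi_pos]) (by nlinarith [pi_pos])
  rw [one_sub_tan_sq_div_two_mul_tan, show 2 * ((1 - ε) * π / 2) = π - π * ε by ring, cot_pi_sub,
    harctan]
  simp only [g, Function.comp_apply]
  field_simp
  ring
end

section
/- For every fixed integer j ≥ 2, the function ε ↦ (1/ε)·∫₀^{(1−ε)π} sin(jθ/(1−ε))·sin θ dθ tends to (−1)^{j+1}·π·j/(j²−1) as ε → 0 from the right. In particular, for j ≥ 2 the integral is of exact order ε as ε → 0⁺. -/
open Filter Topology Real

/-!
By the product-to-sum formula, `sin (a θ) sin θ` integrates in closed form. For `a = j / r` and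
upper limit `r π`, the two boundary angles are `j π ∓ r π`, so both terms collapse to multiples of
`sin (r π)`, giving `∫ = (-1)^(j+1) j r sin (r π) / (j² - r²)`. With `r = 1 - ε` we have
`sin (r π) = sin (ε π) ~ ε π`, and the limit follows from the continuity of `sinc` at `0`.
-/

theorem integral_sin_const_mul_mul_sin {a : ℝ} (ha₁ : a - 1 ≠ 0) (ha₂ : a + 1 ≠ 0) (L : ℝ) :
    ∫ θ in (0 : ℝ)..L, sin (a * θ) * sin θ
      = (sin ((a - 1) * L) / (a - 1) - sin ((a + 1) * L) / (a + 1)) / 2 := by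
  have product_to_sum (θ : ℝ) :
      sin (a * θ) * sin θ = (cos ((a - 1) * θ) - cos ((a + 1) * θ)) / 2 := by
    have := two_mul_sin_mul_sin (a * θ) θ
    ring_nf at this ⊢
    linarith
  simp only [product_to_sum, intervalIntegral.integral_div]
  rw [intervalIntegral.integral_sub (by apply Continuous.intervalIntegrable; fun_prop)
      (by apply Continuous.intervalIntegrable; fun_prop),
    intervalIntegral.integral_comp_mul_left _ ha₁, intervalIntegral.integral_comp_mul_left _ ha₂]
  simp only [integral_cos, mul_zero, sin_zero, sub_zero, smul_eq_mul]
  ring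

theorem integral_sin_nat_mul_div_mul_sin (j : ℕ) {r : ℝ} (hr : r ≠ 0)
    (hjr : (j : ℝ) ^ 2 ≠ r ^ 2) :
    ∫ θ in (0 : ℝ)..r * π, sin (j * θ / r) * sin θ
      = (-1) ^ (j + 1) * sin (r * π) * j * r / ((j : ℝ) ^ 2 - r ^ 2) := by
  have hj₁ : (j : ℝ) - r ≠ 0 := fun h => hjr (by rw [sub_eq_zero.mp h])
  have hj₂ : (j : ℝ) + r ≠ 0 := fun h => hjr (by rw [eq_neg_of_add_eq_zero_left h, neg_sq])
  have ha₁ : j / r - 1 = (j - r) / r := by field_simp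
  have ha₂ : j / r + 1 = (j + r) / r := by field_simp
  simp only [mul_div_right_comm _ _ r]
  rw [integral_sin_const_mul_mul_sin (by rw [ha₁]; exact div_ne_zero hj₁ hr)
    (by rw [ha₂]; exact div_ne_zero hj₂ hr), ha₁, ha₂]
  have e₁ : (j - r) / r * (r * π) = j * π - r * π := by field_simp
  have e₂ : (j + r) / r * (r * π) = r * π + j * π := by field_simp; ring
  rw [e₁, e₂, sin_nat_mul_pi_sub, sin_add_nat_mul_pi]
  field_simp
  ring

theorem inner_product_asymptotics
    (j : ℕ) (hj : 2 ≤ j) :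
    Tendsto
      (fun ε : ℝ =>
        (1 / ε) * ∫ θ in (0 : ℝ)..((1 - ε) * Real.pi),
          Real.sin ((j : ℝ) * θ / (1 - ε)) * Real.sin θ)
      (𝓝[>] 0)
      (𝓝 ((-1 : ℝ) ^ (j + 1) * Real.pi * (j : ℝ) / ((j : ℝ) ^ 2 - 1))) := by
  have hj' : (2 : ℝ) ≤ j := by exact_mod_cast hj
  set F : ℝ → ℝ := fun ε =>
    (-1) ^ (j + 1) * π * sinc (ε * π) * j * (1 - ε) / ((j : ℝ) ^ 2 - (1 - ε) ^ 2)
  have hF : ContinuousAt F 0 := by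
    refine ContinuousAt.div (by fun_prop) (by fun_prop) ?_
    nlinarith
  have hF0 : F 0 = (-1 : ℝ) ^ (j + 1) * π * j / ((j : ℝ) ^ 2 - 1) := by simp [F]
  rw [← hF0]
  refine (hF.tendsto.mono_left nhdsWithin_le_nhds).congr' ?_
  filter_upwards [Ioo_mem_nhdsGT (one_pos : (0 : ℝ) < 1)] with ε ⟨hε₀, hε₁⟩
  have hr : 1 - ε ≠ 0 := by linarith
  have hjr : (j : ℝ) ^ 2 ≠ (1 - ε) ^ 2 := by nlinarith
  have hsin : sin ((1 - ε) * π) = ε * π * sinc (ε * π) := by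
    rw [sinc_of_ne_zero (by positivity), sub_mul, one_mul, sin_pi_sub]
    field_simp
  rw [integral_sin_nat_mul_div_mul_sin j hr hjr, hsin]
  simp only [F]
  field_simp
end

section
/- For all nonnegative integers n and k, the function ζ ↦ ψ(−n−ζ)/Γ(−k−ζ) tends to (−1)^{k+1}·k! as ζ → 0 along nonzero real values, where Γ is the Gamma function and ψ(z) := Γ′(z)/Γ(z) is the digamma function. -/
open Filter Topology
open scoped Nat

/-!
`ψ` and `Γ` have simple poles at the non-positive integers: `(z + n) ψ(z) → -1` as `z → -n` and
`(z + k) Γ(z) → (-1)^k / k!` as `z → -k`. For `z = -n - ζ` and `z = -k - ζ` both factors equal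
`-ζ` and cancel in the quotient, leaving `-1 / ((-1)^k / k!) = (-1)^(k+1) k!`. Both residues follow
by induction on the pole from `Γ(z + 1) = z Γ(z)` and `ψ(z + 1) = ψ(z) + 1/z`, starting from the
regularity of `Γ` and `ψ` at `1`; the real `ψ = logDeriv Γ` is the real part of the complex
digamma, which is how its regularity and functional equation are obtained.
-/

namespace Complex

theorem analyticAt_Gamma {s : ℂ} (hs : ∀ m : ℕ, s ≠ -m) : AnalyticAt ℂ Gamma s := by
  simpa [Pi.inv_def] using
    (differentiable_one_div_Gamma.analyticAt s).inv (inv_ne_zero (Gamma_ne_zero hs))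

theorem continuousAt_digamma {s : ℂ} (hs : ∀ m : ℕ, s ≠ -m) : ContinuousAt digamma s :=
  have hΓ := analyticAt_Gamma hs
  hΓ.deriv.continuousAt.div hΓ.continuousAt (Gamma_ne_zero hs)

end Complex

section PuncturedTranslation

variable {G : Type*} [AddGroup G] [TopologicalSpace G] [IsTopologicalAddGroup G]

theorem tendsto_add_right_nhdsNE (a x : G) : Tendsto (· + a) (𝓝[≠] x) (𝓝[≠] (x + a)) :=
  ((Homeomorph.addRight a).map_punctured_nhds_eq x).le

theorem tendsto_sub_left_nhdsNE (a x : G) : Tendsto (a - ·) (𝓝[≠] x) (𝓝[≠] (a - x)) :=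
  ((Homeomorph.subLeft a).map_punctured_nhds_eq x).le

end PuncturedTranslation

namespace Real

theorem logDeriv_Gamma_eq_re_digamma {x : ℝ} (hx : DifferentiableAt ℂ Complex.Gamma x) :
    logDeriv Gamma x = (Complex.digamma x).re := by
  have hΓ : HasDerivAt Gamma (deriv Complex.Gamma x).re x := hx.hasDerivAt.real_of_complex
  rw [logDeriv_apply, hΓ.deriv, Complex.digamma_def, logDeriv_apply,
    Complex.Gamma_ofReal, Complex.div_ofReal_re]

theorem continuousAt_logDeriv_Gamma {x : ℝ} (hx : ∀ m : ℕ, x ≠ -m) :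
    ContinuousAt (logDeriv Gamma) x := by
  have hx' : ∀ m : ℕ, (x : ℂ) ≠ -m := fun m => by exact_mod_cast hx m
  have hre : ContinuousAt (fun y : ℝ => (Complex.digamma y).re) x :=
    Complex.continuous_re.continuousAt.comp
      ((Complex.continuousAt_digamma hx').comp Complex.continuous_ofReal.continuousAt)
  refine hre.congr ?_
  filter_upwards [Complex.continuous_ofReal.continuousAt.eventually
    (Complex.analyticAt_Gamma hx').eventually_analyticAt] with y hy
  exact (logDeriv_Gamma_eq_re_digamma hy.differentiableAt).symm

theorem logDeriv_Gamma_add_one {s : ℝ} (hs : ∀ m : ℕ, s ≠ -m) :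
    logDeriv Gamma (s + 1) = logDeriv Gamma s + s⁻¹ := by
  have hs' : ∀ m : ℕ, (s : ℂ) ≠ -m := fun m => by exact_mod_cast hs m
  have hs1' : ∀ m : ℕ, ((s + 1 : ℝ) : ℂ) ≠ -m := fun m h =>
    hs' (m + 1) (by push_cast at h ⊢; linear_combination h)
  rw [logDeriv_Gamma_eq_re_digamma (Complex.differentiableAt_Gamma _ hs1'),
    logDeriv_Gamma_eq_re_digamma (Complex.differentiableAt_Gamma _ hs'), Complex.ofReal_add,
    Complex.ofReal_one, Complex.digamma_apply_add_one _ hs', Complex.add_re, ← Complex.ofReal_inv,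
    Complex.ofReal_re]

theorem eventually_ne_neg_nat_nhdsNE (n : ℕ) : ∀ᶠ z : ℝ in 𝓝[≠] (-n), ∀ m : ℕ, z ≠ -m := by
  filter_upwards [nhdsWithin_le_nhds (Metric.ball_mem_nhds (-n : ℝ) one_pos), self_mem_nhdsWithin]
    with z hball hne m rfl
  rw [Metric.mem_ball, Real.dist_eq, abs_sub_lt_iff] at hball
  have h1 : ((n : ℕ) : ℝ) < (m + 1 : ℕ) := by push_cast; linarith
  have h2 : ((m : ℕ) : ℝ) < (n + 1 : ℕ) := by push_cast; linarith
  obtain rfl : m = n := by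
    have := Nat.cast_lt.mp h1; have := Nat.cast_lt.mp h2; omega
  exact hne rfl

theorem tendsto_add_one_nhdsNE_neg_succ (n : ℕ) :
    Tendsto (· + 1) (𝓝[≠] (-(n + 1 : ℕ) : ℝ)) (𝓝[≠] (-n : ℝ)) := by
  rw [show (-n : ℝ) = -(n + 1 : ℕ) + 1 by push_cast; ring]
  exact tendsto_add_right_nhdsNE 1 _

theorem tendsto_add_nat_mul_Gamma_nhdsNE_neg_nat (n : ℕ) :
    Tendsto (fun z => (z + n) * Gamma z) (𝓝[≠] (-n)) (𝓝 ((-1) ^ n / n !)) := by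
  induction n with
  | zero =>
    have hΓ : ContinuousAt Gamma 1 :=
      (differentiableOn_Gamma_Ioi.differentiableAt (Ioi_mem_nhds one_pos)).continuousAt
    have h : Tendsto (fun z => Gamma (z + 1)) (𝓝[≠] 0) (𝓝 (Gamma 1)) :=
      tendsto_nhdsWithin_of_tendsto_nhds
        (hΓ.tendsto.comp ((continuous_add_const 1).tendsto' 0 1 (zero_add 1)))
    rw [Gamma_one] at h
    simp only [Nat.cast_zero, neg_zero, add_zero, pow_zero, Nat.factorial_zero, Nat.cast_one,
      div_one]
    refine h.congr' ?_
    filter_upwards [self_mem_nhdsWithin] with z hz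
    exact Gamma_add_one hz
  | succ n ih =>
    have hinv : Tendsto (·⁻¹) (𝓝[≠] (-(n + 1 : ℕ) : ℝ)) (𝓝 (-(n + 1 : ℕ) : ℝ)⁻¹) :=
      (tendsto_inv₀ (neg_ne_zero.2 (by positivity))).mono_left nhdsWithin_le_nhds
    have hval : (-1) ^ n / n ! * (-(n + 1 : ℕ) : ℝ)⁻¹ = (-1) ^ (n + 1) / (n + 1)! := by
      push_cast [Nat.factorial_succ]; field_simp; ring
    refine (hval ▸ (ih.comp (tendsto_add_one_nhdsNE_neg_succ n)).mul hinv).congr' ?_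
    filter_upwards [eventually_ne_neg_nat_nhdsNE (n + 1)] with z hz
    have hz0 : z ≠ 0 := by simpa using hz 0
    simp only [Function.comp_apply, Gamma_add_one hz0]
    push_cast
    field_simp
    ring

theorem tendsto_add_nat_mul_logDeriv_Gamma_nhdsNE_neg_nat (n : ℕ) :
    Tendsto (fun z => (z + n) * logDeriv Gamma z) (𝓝[≠] (-n)) (𝓝 (-1)) := by
  induction n with
  | zero =>
    have hψ : ContinuousAt (fun z => z * logDeriv Gamma (z + 1) - 1) 0 :=
      (continuousAt_id.mul ((continuousAt_logDeriv_Gamma fun m h => by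
        linarith [(m.cast_nonneg : (0 : ℝ) ≤ m)]).comp_of_eq
        (continuous_add_const 1).continuousAt (zero_add 1))).sub continuousAt_const
    have h : Tendsto (fun z => z * logDeriv Gamma (z + 1) - 1) (𝓝[≠] 0) (𝓝 (-1)) := by
      simpa using tendsto_nhdsWithin_of_tendsto_nhds hψ.tendsto
    simp only [Nat.cast_zero, neg_zero, add_zero]
    refine h.congr' ?_
    have hreg := eventually_ne_neg_nat_nhdsNE 0
    rw [Nat.cast_zero, neg_zero] at hreg
    filter_upwards [hreg] with z hz
    have hz0 : z ≠ 0 := by simpa using hz 0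
    rw [logDeriv_Gamma_add_one (by simpa using hz)]
    field_simp
    ring
  | succ n ih =>
    have hne : (-(n + 1 : ℕ) : ℝ) ≠ 0 := neg_ne_zero.2 (by positivity)
    have hpole : Tendsto (fun z : ℝ => (z + (n + 1 : ℕ)) * z⁻¹) (𝓝[≠] (-(n + 1 : ℕ) : ℝ))
        (𝓝 0) := by
      have h : ContinuousAt (fun z : ℝ => (z + (n + 1 : ℕ)) * z⁻¹) (-(n + 1 : ℕ)) :=
        (continuousAt_id.add continuousAt_const).mul (continuousAt_inv₀ hne)
      simpa using tendsto_nhdsWithin_of_tendsto_nhds h.tendsto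
    have h : Tendsto (fun z => ((z + 1) + n) * logDeriv Gamma (z + 1) - (z + (n + 1 : ℕ)) * z⁻¹)
        (𝓝[≠] (-(n + 1 : ℕ) : ℝ)) (𝓝 (-1)) := by
      simpa using (ih.comp (tendsto_add_one_nhdsNE_neg_succ n)).sub hpole
    refine h.congr' ?_
    filter_upwards [eventually_ne_neg_nat_nhdsNE (n + 1)] with z hz
    simp only [logDeriv_Gamma_add_one hz]
    push_cast
    ring

end Real

theorem digamma_over_gamma_limit (n k : ℕ) :
    Tendsto
      (fun ζ : ℝ =>
        (deriv Real.Gamma (-(n : ℝ) - ζ) / Real.Gamma (-(n : ℝ) - ζ))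
          / Real.Gamma (-(k : ℝ) - ζ))
      (𝓝[≠] 0) (𝓝 ((-1 : ℝ) ^ (k + 1) * (Nat.factorial k : ℝ))) := by
  have hψ := (Real.tendsto_add_nat_mul_logDeriv_Gamma_nhdsNE_neg_nat n).comp
    (sub_zero (-(n : ℝ)) ▸ tendsto_sub_left_nhdsNE _ 0)
  have hΓ := (Real.tendsto_add_nat_mul_Gamma_nhdsNE_neg_nat k).comp
    (sub_zero (-(k : ℝ)) ▸ tendsto_sub_left_nhdsNE _ 0)
  have hval : (-1 : ℝ) / ((-1) ^ k / k !) = (-1) ^ (k + 1) * k ! := by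
    field_simp
    rw [pow_succ, ← mul_assoc, ← mul_pow]
    norm_num
  refine (hval ▸ hψ.div hΓ (by simp [Nat.factorial_ne_zero])).congr' ?_
  filter_upwards [self_mem_nhdsWithin] with ζ hζ
  simp only [Pi.div_apply, Function.comp_apply]
  rw [show -(n : ℝ) - ζ + n = -ζ by ring, show -(k : ℝ) - ζ + k = -ζ by ring,
    mul_div_mul_left _ _ (neg_ne_zero.2 hζ), logDeriv_apply]
end
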